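/- arXiv:1504.00906 — 3 statements merged into one kernel-verified Lean document; each statement's English description precedes it below -/
import Mathlib

section
/- Suppose ε > 0 is such that r₁N₁(1 − N₁/K₁) − ā₁(x̄)N₁P ≥ r₁N₁/2 whenever 0 ≤ N₁ ≤ ε and 0 ≤ P ≤ ε (and x̄ ∈ ℝ). Then any solution of the predator–prey subsystem (N₂ ≡ 0) with 0 < N₁(0) and N₁(t) ≤ ε, P(t) ≤ ε for all t ≥ 0 satisfies N₁(t) ≥ N₁(0)e^{r₁t/2} for all t ≥ 0; consequently there is no bounded invariant set contained in {0 < N₁ ≤ ε, 0 ≤ P ≤ ε} with N₁ > 0. -/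
/-!
On the box `0 ≤ N₁ ≤ ε`, `0 ≤ P ≤ ε` the prey equation gives `N₁' ≥ (r₁ / 2) N₁`, so
`N₁ t · e^{-r₁ t / 2}` is nondecreasing and `N₁` grows at least exponentially from `N₁ 0 > 0`.
In particular `N₁` cannot stay bounded.
-/

open Real

open Filter Set

theorem mul_exp_le_of_hasDerivAt_of_mul_le {f f' : ℝ → ℝ} {c : ℝ}
    (hf : ∀ t ≥ (0:ℝ), HasDerivAt f (f' t) t) (hle : ∀ t ≥ (0:ℝ), c * f t ≤ f' t) :
    ∀ t ≥ (0:ℝ), f 0 * exp (c * t) ≤ f t := by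
  set g : ℝ → ℝ := fun t => f t * exp (-c * t)
  have hg : ∀ t ≥ (0:ℝ), HasDerivAt g ((f' t - c * f t) * exp (-c * t)) t := fun t ht => by
    have hexp := ((hasDerivAt_id t).const_mul (-c)).exp
    simp only [id, mul_one] at hexp
    exact ((hf t ht).mul hexp).congr_deriv (by ring)
  have hmono : MonotoneOn g (Ici 0) := by
    refine monotoneOn_of_hasDerivWithinAt_nonneg (convex_Ici 0)
      (fun t ht => (hg t ht).continuousAt.continuousWithinAt)
      (fun t ht => (hg t (interior_subset ht)).hasDerivWithinAt)
      (fun t ht => ?_)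
    have := hle t (interior_subset ht)
    exact mul_nonneg (by linarith) (exp_pos _).le
  intro t ht
  have hg0t : f 0 ≤ f t * exp (-c * t) := by
    simpa [g] using hmono self_mem_Ici (mem_Ici.mpr ht) ht
  rwa [neg_mul, exp_neg, ← div_eq_mul_inv, le_div_iff₀ (exp_pos _)] at hg0t

theorem tendsto_mul_exp_mul_atTop {A c : ℝ} (hA : 0 < A) (hc : 0 < c) :
    Tendsto (fun t => A * exp (c * t)) atTop atTop :=
  (tendsto_exp_atTop.comp (tendsto_id.const_mul_atTop hc)).const_mul_atTop hA

theorem prey_growth_near_origin_general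
    (r₁ K₁ ε : ℝ) (hr₁ : 0 < r₁)
    (abar₁ : ℝ → ℝ)
    (hεprop : ∀ N₁ P xbar : ℝ, 0 ≤ N₁ → N₁ ≤ ε → 0 ≤ P → P ≤ ε →
      r₁ * N₁ * (1 - N₁ / K₁) - abar₁ xbar * N₁ * P ≥ r₁ * N₁ / 2)
    (N₁ P xbar : ℝ → ℝ)
    (hN₁ : ∀ t ≥ (0:ℝ), HasDerivAt N₁
      (r₁ * N₁ t * (1 - N₁ t / K₁) - abar₁ (xbar t) * N₁ t * P t) t)
    (h0 : 0 < N₁ 0)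
    (hbox : ∀ t ≥ (0:ℝ), 0 ≤ N₁ t ∧ N₁ t ≤ ε ∧ 0 ≤ P t ∧ P t ≤ ε) :
    (∀ t ≥ (0:ℝ), N₁ t ≥ N₁ 0 * Real.exp (r₁ * t / 2)) ∧
    (∀ C : ℝ, ∃ t ≥ (0:ℝ), N₁ t > C) := by
  have hgrowth : ∀ t ≥ (0:ℝ), N₁ 0 * exp (r₁ / 2 * t) ≤ N₁ t :=
    mul_exp_le_of_hasDerivAt_of_mul_le hN₁ fun t ht => by
      obtain ⟨hN₁_nonneg, hN₁_le, hP_nonneg, hP_le⟩ := hbox t ht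
      linarith [hεprop (N₁ t) (P t) (xbar t) hN₁_nonneg hN₁_le hP_nonneg hP_le]
  refine ⟨fun t ht => by rw [mul_div_right_comm]; exact hgrowth t ht, fun C => ?_⟩
  have hunbounded : Tendsto N₁ atTop atTop :=
    tendsto_atTop_mono' atTop ((eventually_ge_atTop 0).mono hgrowth)
      (tendsto_mul_exp_mul_atTop h0 (half_pos hr₁))
  obtain ⟨t, hCt, ht⟩ := ((hunbounded.eventually_gt_atTop C).and (eventually_ge_atTop 0)).exists
  exact ⟨t, ht, hCt⟩

theorem prey_growth_near_origin
    (r₁ K₁ ε : ℝ) (hr₁ : 0 < r₁) (hK₁ : 0 < K₁) (hε : 0 < ε)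
    (abar₁ : ℝ → ℝ) (hp₁ : ∀ x, 0 < abar₁ x)
    (hεprop : ∀ N₁ P xbar : ℝ, 0 ≤ N₁ → N₁ ≤ ε → 0 ≤ P → P ≤ ε →
      r₁ * N₁ * (1 - N₁ / K₁) - abar₁ xbar * N₁ * P ≥ r₁ * N₁ / 2)
    (N₁ P xbar : ℝ → ℝ)
    (hN₁ : ∀ t ≥ (0:ℝ), HasDerivAt N₁
      (r₁ * N₁ t * (1 - N₁ t / K₁) - abar₁ (xbar t) * N₁ t * P t) t)
    (h0 : 0 < N₁ 0)
    (hbox : ∀ t ≥ (0:ℝ), 0 ≤ N₁ t ∧ N₁ t ≤ ε ∧ 0 ≤ P t ∧ P t ≤ ε) :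
    (∀ t ≥ (0:ℝ), N₁ t ≥ N₁ 0 * Real.exp (r₁ * t / 2)) ∧
    (∀ C : ℝ, ∃ t ≥ (0:ℝ), N₁ t > C) :=
  prey_growth_near_origin_general r₁ K₁ ε hr₁ abar₁ hεprop N₁ P xbar hN₁ h0 hbox
end

section
/- Suppose a solution (N₁(t), P(t), x̄(t)) of the predator–prey subsystem satisfies N₁(t) ≥ β for all t ≥ T for some β > 0 and T ≥ 0, and x̄(t) remains bounded. Then lim_{t→∞} x̄(t) = θ₁. -/
/-!
The trait equation reads `x̄' = c(t) (θ₁ - x̄)` with a rate `c ≥ 0`, and for every `k ≤ c` the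
quantity `(x̄ - θ₁)² e^{2kt}` is nonincreasing. Taking `k = 0` shows that `|x̄ - θ₁|` never grows
after `T`; this bounds the Gaussian factor of `c` from below, so together with `N₁ ≥ β` we get
`c ≥ k > 0` for an explicit `k`, and the same quantity then gives `|x̄ - θ₁| = O(e^{-kt})`.
-/

open Real Filter

section LinearRelaxation

variable {f c : ℝ → ℝ} {θ k T : ℝ}

theorem hasDerivAt_sq_sub_mul_exp {t : ℝ} (hf : HasDerivAt f (c t * (θ - f t)) t) :
    HasDerivAt (fun s => (f s - θ) ^ 2 * exp (2 * k * s))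
      (2 * (k - c t) * (f t - θ) ^ 2 * exp (2 * k * t)) t := by
  have hsq := (hf.sub_const θ).fun_pow 2
  have hexp : HasDerivAt (fun s => exp (2 * k * s)) (exp (2 * k * t) * (2 * k)) t := by
    simpa using ((hasDerivAt_id t).const_mul (2 * k)).exp
  refine (hsq.fun_mul hexp).congr_deriv ?_
  push_cast
  ring

theorem antitoneOn_sq_sub_mul_exp (hf : ∀ t ≥ T, HasDerivAt f (c t * (θ - f t)) t)
    (hc : ∀ t ≥ T, k ≤ c t) :
    AntitoneOn (fun s => (f s - θ) ^ 2 * exp (2 * k * s)) (Set.Ici T) := by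
  have hd := fun t (ht : t ∈ Set.Ici T) => hasDerivAt_sq_sub_mul_exp (k := k) (hf t ht)
  apply antitoneOn_of_deriv_nonpos (convex_Ici T)
  · exact fun t ht => (hd t ht).continuousAt.continuousWithinAt
  · exact fun t ht => (hd t (interior_subset ht)).differentiableAt.differentiableWithinAt
  · intro t ht
    rw [interior_Ici] at ht
    have hT : T ≤ t := le_of_lt ht
    rw [(hd t hT).deriv]
    have hrate : 2 * (k - c t) ≤ 0 := by linarith [hc t hT]
    exact mul_nonpos_of_nonpos_of_nonneg
      (mul_nonpos_of_nonpos_of_nonneg hrate (sq_nonneg _)) (exp_pos _).le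

theorem abs_sub_le_mul_exp (hf : ∀ t ≥ T, HasDerivAt f (c t * (θ - f t)) t)
    (hc : ∀ t ≥ T, k ≤ c t) {t : ℝ} (ht : T ≤ t) :
    |f t - θ| ≤ |f T - θ| * exp (-(k * (t - T))) := by
  have hmono := antitoneOn_sq_sub_mul_exp hf hc Set.self_mem_Ici ht ht
  refine abs_le_of_sq_le_sq ?_ (by positivity)
  rw [mul_pow, sq_abs, ← exp_nat_mul, Nat.cast_ofNat]
  calc (f t - θ) ^ 2
      = (f t - θ) ^ 2 * exp (2 * k * t) * exp (-(2 * k * t)) := by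
        rw [mul_assoc, ← exp_add, add_neg_cancel, exp_zero, mul_one]
    _ ≤ (f T - θ) ^ 2 * exp (2 * k * T) * exp (-(2 * k * t)) :=
        mul_le_mul_of_nonneg_right hmono (exp_pos _).le
    _ = (f T - θ) ^ 2 * exp (2 * -(k * (t - T))) := by
        rw [mul_assoc, ← exp_add]
        ring_nf

theorem tendsto_of_hasDerivAt_mul_sub (hk : 0 < k)
    (hf : ∀ t ≥ T, HasDerivAt f (c t * (θ - f t)) t) (hc : ∀ t ≥ T, k ≤ c t) :
    Tendsto f atTop (nhds θ) := by
  have hdecay : Tendsto (fun t => |f T - θ| * exp (-(k * (t - T)))) atTop (nhds 0) := by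
    have := (tendsto_atTop_add_const_right atTop (-T) tendsto_id).const_mul_atTop hk
    simpa [sub_eq_add_neg] using
      (tendsto_exp_neg_atTop_nhds_zero.comp this).const_mul |f T - θ|
  refine tendsto_iff_norm_sub_tendsto_zero.mpr (squeeze_zero' ?_ ?_ hdecay)
  · exact Eventually.of_forall fun t => norm_nonneg _
  · exact (eventually_ge_atTop T).mono fun t ht => abs_sub_le_mul_exp hf hc ht

end LinearRelaxation

noncomputable def selectionRate (σG e₁ τ₁ α₁ σ θ₁ N x : ℝ) : ℝ :=
  σG ^ 2 * e₁ * N * τ₁ * α₁ / (τ₁ ^ 2 + σ ^ 2) ^ ((3 : ℝ) / 2) *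
    exp (-(x - θ₁) ^ 2 / (2 * (τ₁ ^ 2 + σ ^ 2)))

section SelectionRate

variable {σG e₁ τ₁ α₁ σ θ₁ N x : ℝ}

theorem selectionRate_nonneg (he₁ : 0 ≤ e₁) (hτ₁ : 0 ≤ τ₁) (hα₁ : 0 ≤ α₁) (hN : 0 ≤ N) :
    0 ≤ selectionRate σG e₁ τ₁ α₁ σ θ₁ N x := by
  unfold selectionRate
  positivity

theorem selectionRate_pos (hσG : σG ≠ 0) (he₁ : 0 < e₁) (hτ₁ : 0 < τ₁) (hα₁ : 0 < α₁)
    (hN : 0 < N) : 0 < selectionRate σG e₁ τ₁ α₁ σ θ₁ N x := by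
  unfold selectionRate
  positivity

theorem selectionRate_le {β R : ℝ} (he₁ : 0 ≤ e₁) (hτ₁ : 0 ≤ τ₁) (hα₁ : 0 ≤ α₁) (hβ : 0 ≤ β)
    (hN : β ≤ N) (hx : |x - θ₁| ≤ R) :
    selectionRate σG e₁ τ₁ α₁ σ θ₁ β (θ₁ + R) ≤ selectionRate σG e₁ τ₁ α₁ σ θ₁ N x := by
  have hsq : (x - θ₁) ^ 2 ≤ (θ₁ + R - θ₁) ^ 2 := by
    rw [add_sub_cancel_left, ← sq_abs]
    exact pow_le_pow_left₀ (abs_nonneg _) hx 2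
  have hN₀ : 0 ≤ N := hβ.trans hN
  unfold selectionRate
  gcongr

end SelectionRate

theorem trait_converges_to_specialist_general
    (σG e₁ τ₁ α₁ σ θ₁ β T : ℝ)
    (hσG : 0 < σG) (he₁ : 0 < e₁) (hτ₁ : 0 < τ₁) (hα₁ : 0 < α₁)
    (hβ : 0 < β)
    (N₁ xbar : ℝ → ℝ)
    (hx : ∀ t : ℝ, HasDerivAt xbar
      (σG^2 * (e₁ * N₁ t * τ₁ * α₁ * (θ₁ - xbar t) / (τ₁^2 + σ^2)^((3:ℝ)/2) *
        Real.exp (-(xbar t - θ₁)^2 / (2 * (τ₁^2 + σ^2))))) t)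
    (hNβ : ∀ t ≥ T, N₁ t ≥ β) :
    Tendsto xbar atTop (nhds θ₁) := by
  set c : ℝ → ℝ := fun t => selectionRate σG e₁ τ₁ α₁ σ θ₁ (N₁ t) (xbar t)
  have hxc : ∀ t ≥ T, HasDerivAt xbar (c t * (θ₁ - xbar t)) t := fun t _ =>
    (hx t).congr_deriv (by simp only [c, selectionRate]; ring)
  have hc_nonneg : ∀ t ≥ T, 0 ≤ c t := fun t ht =>
    selectionRate_nonneg he₁.le hτ₁.le hα₁.le (hβ.le.trans (hNβ t ht))
  have hdist : ∀ t ≥ T, |xbar t - θ₁| ≤ |xbar T - θ₁| := fun t ht => by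
    simpa using abs_sub_le_mul_exp hxc hc_nonneg ht
  exact tendsto_of_hasDerivAt_mul_sub (selectionRate_pos hσG.ne' he₁ hτ₁ hα₁ hβ) hxc
    fun t ht => selectionRate_le he₁.le hτ₁.le hα₁.le hβ.le (hNβ t ht) (hdist t ht)

theorem trait_converges_to_specialist
    (σG e₁ τ₁ α₁ σ θ₁ β T : ℝ)
    (hσG : 0 < σG) (he₁ : 0 < e₁) (hτ₁ : 0 < τ₁) (hα₁ : 0 < α₁) (hσ : 0 < σ)
    (hβ : 0 < β) (hT : 0 ≤ T)
    (N₁ P xbar : ℝ → ℝ)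
    (hx : ∀ t : ℝ, HasDerivAt xbar
      (σG^2 * (e₁ * N₁ t * τ₁ * α₁ * (θ₁ - xbar t) / (τ₁^2 + σ^2)^((3:ℝ)/2) *
        Real.exp (-(xbar t - θ₁)^2 / (2 * (τ₁^2 + σ^2))))) t)
    (hNβ : ∀ t ≥ T, N₁ t ≥ β)
    (hbdd : ∃ M : ℝ, ∀ t : ℝ, |xbar t| ≤ M) :
    Tendsto xbar atTop (nhds θ₁) :=
  trait_converges_to_specialist_general σG e₁ τ₁ α₁ σ θ₁ β T hσG he₁ hτ₁ hα₁ hβ N₁ xbar hx hNβ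
end

section
/- Fix τ₁ = τ₂ = τ > 0 and σ > 0, and suppose |θ₂ − θ₁| ≤ 2√(σ²+τ²). Then for any e₁, e₂, N₁, N₂, α₁, α₂ > 0, the predator fitness x̄ ↦ W̄(x̄) = e₁ā₁(x̄)N₁ + e₂ā₂(x̄)N₂ − d has exactly one local (hence global) maximum on ℝ; equivalently the selection gradient ∂W̄/∂x̄ has exactly one zero, which is a sign change from positive to negative. -/
/-!
After multiplying by the positive factor `exp ((x - θ₁)² / 2s) * exp ((x - θ₂)² / 2s)`, where
`s = σ² + τ²`, the selection gradient becomes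
`H x = A (θ₁ - x) exp ((x - θ₂)² / 2s) + B (θ₂ - x) exp ((x - θ₁)² / 2s)` with `A, B > 0`,
whose derivative is `-((x - θ₁)(x - θ₂) + s) / s` times a positive quantity. Since
`(x - θ₁)(x - θ₂) + s = (x - m)² + s - (θ₂ - θ₁)² / 4` with `m` the midpoint of the centres,
the condition `(θ₂ - θ₁)² ≤ 4s` makes `H` strictly decreasing. As `H` is positive to the left of
both centres and negative to the right of both, it has exactly one zero, where it changes sign
from positive to negative.
-/

open Real Set

def IsUniqueDescendingZero (f : ℝ → ℝ) (x₀ : ℝ) : Prop :=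
  f x₀ = 0 ∧ (∀ x < x₀, 0 < f x) ∧ (∀ x, x₀ < x → f x < 0) ∧ ∀ x, f x = 0 → x = x₀

section SignChange

variable {f : ℝ → ℝ}

theorem strictAnti_of_hasDerivAt_neg_of_ne {f' : ℝ → ℝ} (a : ℝ)
    (hf : ∀ x, HasDerivAt f (f' x) x) (hf' : ∀ x ≠ a, f' x < 0) : StrictAnti f := by
  have hc : ContinuousOn f univ := fun x _ => (hf x).continuousAt.continuousWithinAt
  have hneg : ∀ x ≠ a, deriv f x < 0 := fun x hx => (hf x).deriv ▸ hf' x hx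
  refine StrictAntiOn.Iic_union_Ici (a := a) ?_ ?_
  · refine strictAntiOn_of_deriv_neg (convex_Iic a) (hc.mono (subset_univ _)) fun x hx => ?_
    exact hneg x (interior_Iic (a := a) ▸ hx).ne
  · refine strictAntiOn_of_deriv_neg (convex_Ici a) (hc.mono (subset_univ _)) fun x hx => ?_
    exact hneg x (interior_Ici (a := a) ▸ hx).ne'

theorem StrictAnti.isUniqueDescendingZero (hf : StrictAnti f) {x₀ : ℝ} (h : f x₀ = 0) :
    IsUniqueDescendingZero f x₀ :=
  ⟨h, fun _ hx => h ▸ hf hx, fun _ hx => h ▸ hf hx, fun _ hx => hf.injective (hx.trans h.symm)⟩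

theorem StrictAnti.exists_isUniqueDescendingZero (hf : StrictAnti f) (hc : Continuous f)
    {a b : ℝ} (ha : 0 < f a) (hb : f b < 0) : ∃ x₀, IsUniqueDescendingZero f x₀ := by
  obtain ⟨x₀, hx₀⟩ := intermediate_value_univ b a hc ⟨hb.le, ha.le⟩
  exact ⟨x₀, hf.isUniqueDescendingZero hx₀⟩

theorem IsUniqueDescendingZero.mul_pos {x₀ : ℝ} (h : IsUniqueDescendingZero f x₀)
    {w : ℝ → ℝ} (hw : ∀ x, 0 < w x) : IsUniqueDescendingZero (fun x => f x * w x) x₀ := by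
  obtain ⟨h₀, hlt, hgt, huniq⟩ := h
  refine ⟨by simp [h₀], fun x hx => _root_.mul_pos (hlt x hx) (hw x),
    fun x hx => mul_neg_of_neg_of_pos (hgt x hx) (hw x), fun x hx => huniq x ?_⟩
  exact (mul_eq_zero.mp hx).resolve_right (hw x).ne'

end SignChange

section GaussianPair

variable (A B θ₁ θ₂ s : ℝ)

noncomputable def gaussianPairGradient (x : ℝ) : ℝ :=
  A * (θ₁ - x) * exp (-(x - θ₁) ^ 2 / (2 * s)) + B * (θ₂ - x) * exp (-(x - θ₂) ^ 2 / (2 * s))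

noncomputable def rescaledGaussianPairGradient (x : ℝ) : ℝ :=
  A * (θ₁ - x) * exp ((x - θ₂) ^ 2 / (2 * s)) + B * (θ₂ - x) * exp ((x - θ₁) ^ 2 / (2 * s))

theorem gaussianPairGradient_eq_mul (x : ℝ) :
    gaussianPairGradient A B θ₁ θ₂ s x = rescaledGaussianPairGradient A B θ₁ θ₂ s x *
      (exp (-(x - θ₁) ^ 2 / (2 * s)) * exp (-(x - θ₂) ^ 2 / (2 * s))) := by
  simp only [gaussianPairGradient, rescaledGaussianPairGradient, neg_div, exp_neg]
  field_simp

theorem hasDerivAt_rescaledGaussianPairGradient {s : ℝ} (hs : s ≠ 0) (x : ℝ) :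
    HasDerivAt (rescaledGaussianPairGradient A B θ₁ θ₂ s)
      (-((x - θ₁) * (x - θ₂) + s) / s *
        (A * exp ((x - θ₂) ^ 2 / (2 * s)) + B * exp ((x - θ₁) ^ 2 / (2 * s)))) x := by
  have hsq : ∀ θ : ℝ, HasDerivAt (fun x => (x - θ) ^ 2 / (2 * s)) ((x - θ) / s) x := fun θ => by
    refine ((((hasDerivAt_id' x).sub_const θ).pow 2).div_const (2 * s)).congr_deriv ?_
    field_simp
    ring
  have hlin : ∀ C θ : ℝ, HasDerivAt (fun x => C * (θ - x)) (-C) x := fun C θ => by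
    simpa using ((hasDerivAt_id' x).const_sub θ).const_mul C
  refine (((hlin A θ₁).mul (hsq θ₂).exp).add ((hlin B θ₂).mul (hsq θ₁).exp)).congr_deriv ?_
  field_simp
  ring

theorem strictAnti_rescaledGaussianPairGradient {A B s : ℝ} (hA : 0 < A) (hB : 0 < B)
    (hs : 0 < s) (hθ : (θ₂ - θ₁) ^ 2 ≤ 4 * s) :
    StrictAnti (rescaledGaussianPairGradient A B θ₁ θ₂ s) := by
  refine strictAnti_of_hasDerivAt_neg_of_ne ((θ₁ + θ₂) / 2)
    (hasDerivAt_rescaledGaussianPairGradient A B θ₁ θ₂ hs.ne') fun x hx => ?_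
  have hx : 0 < (x - (θ₁ + θ₂) / 2) ^ 2 := sq_pos_of_ne_zero (sub_ne_zero.mpr hx)
  have hquad : 0 < (x - θ₁) * (x - θ₂) + s := by nlinarith
  have hweights : 0 < A * exp ((x - θ₂) ^ 2 / (2 * s)) + B * exp ((x - θ₁) ^ 2 / (2 * s)) := by
    positivity
  exact mul_neg_of_neg_of_pos (div_neg_of_neg_of_pos (neg_neg_of_pos hquad) hs) hweights

theorem rescaledGaussianPairGradient_pos {A B : ℝ} (hA : 0 < A) (hB : 0 < B) {x : ℝ}
    (h₁ : x < θ₁) (h₂ : x < θ₂) : 0 < rescaledGaussianPairGradient A B θ₁ θ₂ s x := by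
  have h₁ : 0 < θ₁ - x := sub_pos.mpr h₁
  have h₂ : 0 < θ₂ - x := sub_pos.mpr h₂
  unfold rescaledGaussianPairGradient
  positivity

theorem rescaledGaussianPairGradient_neg {A B : ℝ} (hA : 0 < A) (hB : 0 < B) {x : ℝ}
    (h₁ : θ₁ < x) (h₂ : θ₂ < x) : rescaledGaussianPairGradient A B θ₁ θ₂ s x < 0 := by
  have h₁ : A * (θ₁ - x) < 0 := mul_neg_of_pos_of_neg hA (sub_neg.mpr h₁)
  have h₂ : B * (θ₂ - x) < 0 := mul_neg_of_pos_of_neg hB (sub_neg.mpr h₂)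
  unfold rescaledGaussianPairGradient
  have := mul_neg_of_neg_of_pos h₁ (exp_pos ((x - θ₂) ^ 2 / (2 * s)))
  have := mul_neg_of_neg_of_pos h₂ (exp_pos ((x - θ₁) ^ 2 / (2 * s)))
  linarith

theorem exists_isUniqueDescendingZero_gaussianPairGradient {A B s : ℝ} (hA : 0 < A) (hB : 0 < B)
    (hs : 0 < s) (hθ : (θ₂ - θ₁) ^ 2 ≤ 4 * s) :
    ∃ x₀, IsUniqueDescendingZero (gaussianPairGradient A B θ₁ θ₂ s) x₀ := by
  have hanti := strictAnti_rescaledGaussianPairGradient θ₁ θ₂ hA hB hs hθ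
  have hcont : Continuous (rescaledGaussianPairGradient A B θ₁ θ₂ s) :=
    continuous_iff_continuousAt.mpr fun x =>
      (hasDerivAt_rescaledGaussianPairGradient A B θ₁ θ₂ hs.ne' x).continuousAt
  obtain ⟨x₀, hx₀⟩ := hanti.exists_isUniqueDescendingZero hcont
    (rescaledGaussianPairGradient_pos θ₁ θ₂ s hA hB (x := min θ₁ θ₂ - 1)
      (by linarith [min_le_left θ₁ θ₂]) (by linarith [min_le_right θ₁ θ₂]))
    (rescaledGaussianPairGradient_neg θ₁ θ₂ s hA hB (x := max θ₁ θ₂ + 1)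
      (by linarith [le_max_left θ₁ θ₂]) (by linarith [le_max_right θ₁ θ₂]))
  refine ⟨x₀, ?_⟩
  rw [funext (gaussianPairGradient_eq_mul A B θ₁ θ₂ s)]
  exact hx₀.mul_pos fun x => by positivity

end GaussianPair

theorem weak_tradeoff_unimodal_fitness_general
    (τ σ θ₁ θ₂ e₁ e₂ N₁ N₂ α₁ α₂ : ℝ)
    (hτ : 0 < τ)
    (hθ : |θ₂ - θ₁| ≤ 2 * Real.sqrt (σ^2 + τ^2))
    (he₁ : 0 < e₁) (he₂ : 0 < e₂) (hN₁ : 0 < N₁) (hN₂ : 0 < N₂)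
    (hα₁ : 0 < α₁) (hα₂ : 0 < α₂) :
    let G : ℝ → ℝ := fun xbar =>
      e₁ * N₁ * τ * α₁ * (θ₁ - xbar) / (τ^2 + σ^2)^((3:ℝ)/2) *
        Real.exp (-(xbar - θ₁)^2 / (2 * (τ^2 + σ^2))) +
      e₂ * N₂ * τ * α₂ * (θ₂ - xbar) / (τ^2 + σ^2)^((3:ℝ)/2) *
        Real.exp (-(xbar - θ₂)^2 / (2 * (τ^2 + σ^2)))
    ∃ x₀ : ℝ, G x₀ = 0 ∧ (∀ x < x₀, 0 < G x) ∧ (∀ x, x₀ < x → G x < 0) ∧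
      (∀ x : ℝ, G x = 0 → x = x₀) := by
  intro G
  have hs : 0 < τ ^ 2 + σ ^ 2 := by positivity
  have hθ' : (θ₂ - θ₁) ^ 2 ≤ 4 * (τ ^ 2 + σ ^ 2) :=
    calc (θ₂ - θ₁) ^ 2 = |θ₂ - θ₁| ^ 2 := (sq_abs _).symm
      _ ≤ (2 * √(σ ^ 2 + τ ^ 2)) ^ 2 := by gcongr
      _ = 4 * (τ ^ 2 + σ ^ 2) := by rw [mul_pow, sq_sqrt (by positivity)]; ring
  have hG : G = gaussianPairGradient (e₁ * N₁ * τ * α₁ / (τ ^ 2 + σ ^ 2) ^ ((3 : ℝ) / 2))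
      (e₂ * N₂ * τ * α₂ / (τ ^ 2 + σ ^ 2) ^ ((3 : ℝ) / 2)) θ₁ θ₂ (τ ^ 2 + σ ^ 2) := by
    funext x
    simp only [G, gaussianPairGradient]
    ring
  rw [hG]
  exact exists_isUniqueDescendingZero_gaussianPairGradient θ₁ θ₂ (by positivity) (by positivity)
    hs hθ'

theorem weak_tradeoff_unimodal_fitness
    (τ σ θ₁ θ₂ e₁ e₂ N₁ N₂ α₁ α₂ d : ℝ)
    (hτ : 0 < τ) (hσ : 0 < σ)
    (hθ : |θ₂ - θ₁| ≤ 2 * Real.sqrt (σ^2 + τ^2))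
    (he₁ : 0 < e₁) (he₂ : 0 < e₂) (hN₁ : 0 < N₁) (hN₂ : 0 < N₂)
    (hα₁ : 0 < α₁) (hα₂ : 0 < α₂) :
    let G : ℝ → ℝ := fun xbar =>
      e₁ * N₁ * τ * α₁ * (θ₁ - xbar) / (τ^2 + σ^2)^((3:ℝ)/2) *
        Real.exp (-(xbar - θ₁)^2 / (2 * (τ^2 + σ^2))) +
      e₂ * N₂ * τ * α₂ * (θ₂ - xbar) / (τ^2 + σ^2)^((3:ℝ)/2) *
        Real.exp (-(xbar - θ₂)^2 / (2 * (τ^2 + σ^2)))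
    ∃ x₀ : ℝ, G x₀ = 0 ∧ (∀ x < x₀, 0 < G x) ∧ (∀ x, x₀ < x → G x < 0) ∧
      (∀ x : ℝ, G x = 0 → x = x₀) :=
  weak_tradeoff_unimodal_fitness_general τ σ θ₁ θ₂ e₁ e₂ N₁ N₂ α₁ α₂ hτ hθ he₁ he₂ hN₁ hN₂ hα₁ hα₂
end
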